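/- arXiv:1104.4750 — 4 statements merged into one kernel-verified Lean document; each statement's English description precedes it below -/
import Mathlib

section
/- For odd n ≥ 3, the joint rank-2^{n-1} numerical range Λ_{2^{n-1}}(X_n, Y_n, Z_n) is nonempty; specifically (0,0,1) ∈ Λ_{2^{n-1}}(X_n, Y_n, Z_n). -/
open Matrix Finset Complex

noncomputable def sigmaX : Matrix (Fin 2) (Fin 2) ℂ := !![0, 1; 1, 0]
noncomputable def sigmaY : Matrix (Fin 2) (Fin 2) ℂ := !![0, -Complex.I; Complex.I, 0]
noncomputable def sigmaZ : Matrix (Fin 2) (Fin 2) ℂ := !![1, 0; 0, -1]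

/-- `n`-fold Kronecker (tensor) power of a `2 × 2` matrix, acting on `ℂ^{2^n}`
indexed by bit strings. -/
noncomputable def tpow (A : Matrix (Fin 2) (Fin 2) ℂ) (n : ℕ) :
    Matrix (Fin n → Fin 2) (Fin n → Fin 2) ℂ :=
  Matrix.of fun j k => ∏ i, A (j i) (k i)

/-- The joint rank-`k` numerical range of three matrices: triples `(a₁,a₂,a₃)` such that
`P Aⱼ P = aⱼ P` for some rank-`k` orthogonal projection `P`. -/
def jointRank3 {ι : Type*} [Fintype ι] [DecidableEq ι] (k : ℕ)
    (A B C : Matrix ι ι ℂ) : Set (ℂ × ℂ × ℂ) :=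
  {t | ∃ P : Matrix ι ι ℂ, P.IsHermitian ∧ P * P = P ∧ P.rank = k ∧
    P * A * P = t.1 • P ∧ P * B * P = t.2.1 • P ∧ P * C * P = t.2.2 • P}

/-!
The witness is the projection `P` onto the span of the basis vectors `|j⟩` whose bit string
`j` has even Hamming weight; there are `2 ^ (n - 1)` of them. Since `σ_z` is diagonal with
entries `±1`, `Z_n` is diagonal with entry `(-1) ^ |j|`, so `P Z_n P = P`. The matrices
`σ_x` and `σ_y` vanish on the diagonal, so the `(j, k)` entry of `X_n` or `Y_n` vanishes as
soon as `j` and `k` agree in some bit; two strings of even weight that differ in all `n` bits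
would have weights summing to the odd number `n`, hence `P X_n P = P Y_n P = 0`.
-/

namespace Matrix

variable {ι R : Type*} [DecidableEq ι]

def diagProj [Zero R] [One R] (s : Finset ι) : Matrix ι ι R :=
  diagonal fun i => if i ∈ s then 1 else 0

theorem diagProj_isHermitian [Semiring R] [StarRing R] (s : Finset ι) :
    (diagProj s : Matrix ι ι R).IsHermitian := by
  rw [IsHermitian, diagProj, diagonal_conjTranspose]
  congr 1
  ext i
  simp only [Pi.star_apply]
  split_ifs <;> simp

theorem diagProj_mul_self [Fintype ι] [Semiring R] (s : Finset ι) :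
    (diagProj s * diagProj s : Matrix ι ι R) = diagProj s := by
  rw [diagProj, diagonal_mul_diagonal]
  congr 1
  ext i
  split_ifs <;> simp

theorem rank_diagProj [Fintype ι] {K : Type*} [Field K] (s : Finset ι) :
    (diagProj s : Matrix ι ι K).rank = #s := by
  classical
  rw [diagProj, rank_diagonal, ← Fintype.card_coe]
  exact Fintype.card_congr (Equiv.subtypeEquivRight fun i => by simp)

theorem diagProj_mul_mul_diagProj_apply [Fintype ι] [Semiring R] (s : Finset ι)
    (A : Matrix ι ι R) (j k : ι) :
    (diagProj s * A * diagProj s : Matrix ι ι R) j k =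
      if j ∈ s ∧ k ∈ s then A j k else 0 := by
  simp only [diagProj, mul_diagonal, diagonal_mul]
  split_ifs <;> simp_all

theorem diagProj_mul_mul_diagProj_eq_smul [Fintype ι] [Semiring R] {s : Finset ι}
    {A : Matrix ι ι R} {a : R} (h : ∀ j ∈ s, ∀ k ∈ s, A j k = if j = k then a else 0) :
    diagProj s * A * diagProj s = a • diagProj s := by
  ext j k
  rw [diagProj_mul_mul_diagProj_apply, smul_apply, diagProj, diagonal_apply]
  split_ifs <;> simp_all

end Matrix

def evenWeightStrings (n : ℕ) : Finset (Fin n → Fin 2) := {j | Even (∑ i, (j i : ℕ))}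

theorem mem_evenWeightStrings {n : ℕ} {j : Fin n → Fin 2} :
    j ∈ evenWeightStrings n ↔ Even (∑ i, (j i : ℕ)) := by
  simp [evenWeightStrings]

theorem card_evenWeightStrings_succ (m : ℕ) : #(evenWeightStrings (m + 1)) = 2 ^ m := by
  -- the first bit of an even-weight string is the parity of the others
  let parity (g : Fin m → Fin 2) : Fin 2 := ⟨(∑ i, (g i : ℕ)) % 2, Nat.mod_lt _ two_pos⟩
  calc #(evenWeightStrings (m + 1)) = #(univ : Finset (Fin m → Fin 2)) := by
        refine card_nbij' Fin.tail (fun g => Fin.cons (parity g) g)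
          (fun _ _ => mem_coe.2 (mem_univ _)) (fun g _ => ?_) (fun j hj => ?_)
          (fun g _ => Fin.tail_cons _ _)
        · rw [mem_coe, mem_evenWeightStrings, Fin.sum_univ_succ, Nat.even_iff]
          simp only [Fin.cons_zero, Fin.cons_succ, parity]
          omega
        · rw [mem_coe, mem_evenWeightStrings, Fin.sum_univ_succ, Nat.even_iff] at hj
          have hbit : parity (Fin.tail j) = j 0 := by
            have := (j 0).isLt
            ext
            simp only [parity, Fin.tail]
            omega
          simp only [hbit, Fin.cons_self_tail]
    _ = 2 ^ m := by simp

theorem card_evenWeightStrings {n : ℕ} (hn : n ≠ 0) : #(evenWeightStrings n) = 2 ^ (n - 1) := by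
  obtain ⟨m, rfl⟩ := Nat.exists_eq_succ_of_ne_zero hn
  exact card_evenWeightStrings_succ m

theorem sum_val_add_sum_val_of_forall_ne {n : ℕ} {j k : Fin n → Fin 2}
    (h : ∀ i, j i ≠ k i) :
    ∑ i, (j i : ℕ) + ∑ i, (k i : ℕ) = n := by
  have hjk : ∀ a b : Fin 2, a ≠ b → (a : ℕ) + b = 1 := by decide
  simp [← sum_add_distrib, hjk _ _ (h _)]

theorem exists_eq_of_mem_evenWeightStrings {n : ℕ} (hn : Odd n) {j k : Fin n → Fin 2}
    (hj : j ∈ evenWeightStrings n) (hk : k ∈ evenWeightStrings n) : ∃ i, j i = k i := by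
  by_contra! h
  rw [mem_evenWeightStrings] at hj hk
  have := hj.add hk
  rw [sum_val_add_sum_val_of_forall_ne h] at this
  exact Nat.not_even_iff_odd.2 hn this

theorem tpow_apply_eq_zero {A : Matrix (Fin 2) (Fin 2) ℂ} (hA : ∀ a, A a a = 0) {n : ℕ}
    {j k : Fin n → Fin 2} {i : Fin n} (hi : j i = k i) : tpow A n j k = 0 :=
  prod_eq_zero (mem_univ i) (hi ▸ hA (j i))

theorem tpow_diagonal (d : Fin 2 → ℂ) (n : ℕ) :
    tpow (diagonal d) n = diagonal fun j => ∏ i, d (j i) := by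
  ext j k
  by_cases hjk : j = k
  · subst hjk
    simp [tpow]
  · obtain ⟨i, hi⟩ := Function.ne_iff.mp hjk
    rw [diagonal_apply_ne _ hjk]
    exact prod_eq_zero (mem_univ i) (diagonal_apply_ne _ hi)

theorem sigmaZ_eq_diagonal : sigmaZ = diagonal fun a : Fin 2 => (-1) ^ (a : ℕ) := by
  ext a b
  fin_cases a <;> fin_cases b <;> simp [sigmaZ]

theorem tpow_sigmaZ (n : ℕ) : tpow sigmaZ n = diagonal fun j => (-1) ^ ∑ i, (j i : ℕ) := by
  simp only [sigmaZ_eq_diagonal, tpow_diagonal, prod_pow_eq_pow_sum]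

theorem sigmaX_apply_self (a : Fin 2) : sigmaX a a = 0 := by
  fin_cases a <;> simp [sigmaX]

theorem sigmaY_apply_self (a : Fin 2) : sigmaY a a = 0 := by
  fin_cases a <;> simp [sigmaY]

theorem diagProj_mul_tpow_mul_diagProj_of_diag_eq_zero {n : ℕ} (hn : Odd n)
    {A : Matrix (Fin 2) (Fin 2) ℂ} (hA : ∀ a, A a a = 0) :
    diagProj (evenWeightStrings n) * tpow A n * diagProj (evenWeightStrings n) =
      (0 : ℂ) • diagProj (evenWeightStrings n) :=
  diagProj_mul_mul_diagProj_eq_smul fun j hj k hk => by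
    obtain ⟨i, hi⟩ := exists_eq_of_mem_evenWeightStrings hn hj hk
    rw [tpow_apply_eq_zero hA hi, ite_self]

theorem diagProj_mul_tpow_sigmaZ_mul_diagProj (n : ℕ) :
    diagProj (evenWeightStrings n) * tpow sigmaZ n * diagProj (evenWeightStrings n) =
      (1 : ℂ) • diagProj (evenWeightStrings n) :=
  diagProj_mul_mul_diagProj_eq_smul fun j hj k _ => by
    rw [tpow_sigmaZ, diagonal_apply, (mem_evenWeightStrings.1 hj).neg_one_pow]

theorem jointRank3_nonempty_odd_general (n : ℕ) (hodd : Odd n) :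
    ((0 : ℂ), (0 : ℂ), (1 : ℂ)) ∈
      jointRank3 (2 ^ (n - 1)) (tpow sigmaX n) (tpow sigmaY n) (tpow sigmaZ n) :=
  ⟨diagProj (evenWeightStrings n), diagProj_isHermitian _, diagProj_mul_self _,
    (rank_diagProj _).trans (card_evenWeightStrings hodd.pos.ne'),
    diagProj_mul_tpow_mul_diagProj_of_diag_eq_zero hodd sigmaX_apply_self,
    diagProj_mul_tpow_mul_diagProj_of_diag_eq_zero hodd sigmaY_apply_self,
    diagProj_mul_tpow_sigmaZ_mul_diagProj n⟩

theorem jointRank3_nonempty_odd (n : ℕ) (hn : 3 ≤ n) (hodd : Odd n) :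
    ((0 : ℂ), (0 : ℂ), (1 : ℂ)) ∈
      jointRank3 (2 ^ (n - 1)) (tpow sigmaX n) (tpow sigmaY n) (tpow sigmaZ n) :=
  jointRank3_nonempty_odd_general n hodd
end

section
/- Let P be a 2^n × 2^n rank-2^{n-1} orthogonal projection with P X P = 0 where X = I_{2^{n-1}} ⊕ (-I_{2^{n-1}}). Then there exist unitaries U, V of size 2^{n-1} such that P = (1/2)[[I, UV^†],[VU^†, I]] conjugated appropriately, i.e., P_{11} = P_{22} = (1/2)I_{2^{n-1}} and P_{12} = (1/2) U V^† for some unitaries U, V. -/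
/-!
With `X = diag(1, -1)`, the condition `P X P = 0` makes `Q = P + X P X` an idempotent, and its
trace is `2 rank P = 2ⁿ`, so `Q = 1`. Since `X P X` flips the signs of the off-diagonal blocks,
this says that both diagonal blocks of `P` equal `1/2`. The `(1,1)` block of `P² = P` then reads
`1/4 + P₁₂ P₁₂ᴴ = 1/2`, so `U = 2 P₁₂` is unitary, and `V = 1` completes the decomposition
because `P₂₁ = P₁₂ᴴ`.
-/

open Matrix

theorem IsIdempotentElem.conj_of_mul_self_eq_one {M : Type*} [Monoid M] {p s : M}
    (hp : IsIdempotentElem p) (hs : s * s = 1) : IsIdempotentElem (s * p * s) := by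
  rw [IsIdempotentElem, show s * p * s * (s * p * s) = s * (p * (s * s) * p) * s by
    simp only [mul_assoc], hs, mul_one, hp.eq]

theorem eq_one_div_two_smul_of_add_self_eq {R M : Type*} [DivisionRing R] [NeZero (2 : R)]
    [AddCommGroup M] [Module R M] {a b : M} (h : a + a = b) : a = (1 / 2 : R) • b := by
  rw [← h, ← two_smul R, smul_smul, one_div_mul_cancel two_ne_zero, one_smul]

namespace Matrix

section Idempotent

variable {m K : Type*} [Fintype m] [DecidableEq m] [Field K]

theorem _root_.IsIdempotentElem.toLin' {P : Matrix m m K} (hP : IsIdempotentElem P) :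
    IsIdempotentElem P.toLin' :=
  hP.map toLinAlgEquiv'

theorem _root_.IsIdempotentElem.trace_eq_rank {P : Matrix m m K} (hP : IsIdempotentElem P) :
    P.trace = P.rank := by
  rw [← trace_toLin'_eq, (LinearMap.IsIdempotentElem.isProj_range _ hP.toLin').trace]
  rfl

theorem _root_.IsIdempotentElem.eq_one_of_trace_eq_card [CharZero K] {Q : Matrix m m K}
    (hQ : IsIdempotentElem Q) (htr : Q.trace = Fintype.card m) : Q = 1 := by
  have htr' : LinearMap.trace K _ (1 - Q).toLin' = 0 := by
    rw [trace_toLin'_eq, trace_sub, trace_one, htr, sub_self]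
  exact (sub_eq_zero.mp (toLin'.map_eq_zero_iff.mp
    (LinearMap.IsIdempotentElem.eq_zero_of_trace_eq_zero hQ.one_sub.toLin' htr'))).symm

theorem add_conj_eq_one_of_mul_conj_mul_eq_zero [CharZero K] {P S : Matrix m m K}
    (hP : IsIdempotentElem P) (hS : S * S = 1) (hPSP : P * S * P = 0)
    (hrank : 2 * P.rank = Fintype.card m) : P + S * P * S = 1 := by
  refine (hP.add (hP.conj_of_mul_self_eq_one hS) ?_).eq_one_of_trace_eq_card ?_
  · calc P * (S * P * S) + S * P * S * P = P * S * P * S + S * (P * S * P) := by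
          simp only [mul_assoc]
      _ = 0 := by rw [hPSP, zero_mul, mul_zero, add_zero]
  · rw [trace_add, trace_mul_cycle, hS, one_mul, hP.trace_eq_rank, ← two_mul, ← hrank]
    push_cast
    rfl

end Idempotent

section Blocks

variable {n o R : Type*} [Fintype n] [Fintype o] [DecidableEq n] [DecidableEq o]

theorem fromBlocks_one_neg_one_mul_self [Ring R] :
    fromBlocks (1 : Matrix n n R) 0 0 (-1 : Matrix o o R) * fromBlocks 1 0 0 (-1) = 1 := by
  simp [fromBlocks_multiply, fromBlocks_one]

theorem fromBlocks_one_neg_one_conj [Ring R] (A : Matrix n n R) (B : Matrix n o R)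
    (C : Matrix o n R) (D : Matrix o o R) :
    fromBlocks 1 0 0 (-1) * fromBlocks A B C D * fromBlocks 1 0 0 (-1) =
      fromBlocks A (-B) (-C) D := by
  simp [fromBlocks_multiply]

theorem eq_fromBlocks_half_of_add_conj_eq_one [DivisionRing R] [NeZero (2 : R)]
    {P : Matrix (n ⊕ o) (n ⊕ o) R}
    (h : P + fromBlocks 1 0 0 (-1) * P * fromBlocks 1 0 0 (-1) = 1) :
    P = fromBlocks ((1 / 2 : R) • 1) P.toBlocks₁₂ P.toBlocks₂₁ ((1 / 2 : R) • 1) := by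
  rw [← fromBlocks_toBlocks P, fromBlocks_one_neg_one_conj, fromBlocks_add, ← fromBlocks_one]
    at h
  obtain ⟨h₁₁, -, -, h₂₂⟩ := fromBlocks_inj.mp h
  conv_lhs => rw [← fromBlocks_toBlocks P, eq_one_div_two_smul_of_add_self_eq (R := R) h₁₁,
    eq_one_div_two_smul_of_add_self_eq (R := R) h₂₂]

theorem two_smul_mem_unitaryGroup_of_isIdempotentElem_fromBlocks [RCLike R]
    {B D : Matrix n n R}
    (h : IsIdempotentElem (fromBlocks ((1 / 2 : R) • 1) B Bᴴ D)) :
    (2 : R) • B ∈ unitaryGroup n R := by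
  rw [IsIdempotentElem, fromBlocks_multiply] at h
  obtain ⟨h₁₁, -, -, -⟩ := fromBlocks_inj.mp h
  rw [mem_unitaryGroup_iff, star_eq_conjTranspose, conjTranspose_smul, smul_mul_smul_comm,
    eq_sub_of_add_eq' h₁₁, smul_mul_smul_comm, one_mul, ← sub_smul, smul_smul]
  norm_num

end Blocks

end Matrix

theorem projection_block_structure_general (n : ℕ)
    (P : Matrix (Fin (2 ^ (n - 1)) ⊕ Fin (2 ^ (n - 1)))
                (Fin (2 ^ (n - 1)) ⊕ Fin (2 ^ (n - 1))) ℂ)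
    (hP : P.IsHermitian) (hP2 : P * P = P) (hrank : P.rank = 2 ^ (n - 1))
    (hPXP : P * Matrix.fromBlocks (1 : Matrix (Fin (2 ^ (n - 1))) (Fin (2 ^ (n - 1))) ℂ)
        0 0 (-1) * P = 0) :
    ∃ U V : Matrix (Fin (2 ^ (n - 1))) (Fin (2 ^ (n - 1))) ℂ,
      U * Uᴴ = 1 ∧ Uᴴ * U = 1 ∧ V * Vᴴ = 1 ∧ Vᴴ * V = 1 ∧
      P = Matrix.fromBlocks ((1 / 2 : ℂ) • 1) ((1 / 2 : ℂ) • (U * Vᴴ))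
            ((1 / 2 : ℂ) • (V * Uᴴ)) ((1 / 2 : ℂ) • 1) := by
  have hsum : P + fromBlocks 1 0 0 (-1) * P * fromBlocks 1 0 0 (-1) = 1 :=
    add_conj_eq_one_of_mul_conj_mul_eq_zero hP2 fromBlocks_one_neg_one_mul_self hPXP
      (by rw [hrank, Fintype.card_sum, Fintype.card_fin, two_mul])
  set B := P.toBlocks₁₂
  have hblocks : P = fromBlocks ((1 / 2 : ℂ) • 1) B Bᴴ ((1 / 2 : ℂ) • 1) := by
    rw [(isHermitian_fromBlocks_iff.mp ((fromBlocks_toBlocks P).symm ▸ hP)).2.1]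
    exact eq_fromBlocks_half_of_add_conj_eq_one hsum
  have hU : (2 : ℂ) • B ∈ unitaryGroup _ ℂ :=
    two_smul_mem_unitaryGroup_of_isIdempotentElem_fromBlocks (hblocks ▸ hP2)
  refine ⟨(2 : ℂ) • B, 1, mem_unitaryGroup_iff.mp hU, mem_unitaryGroup_iff'.mp hU, by simp,
    by simp, ?_⟩
  simpa [smul_smul] using hblocks

theorem projection_block_structure (n : ℕ) (hn : 1 ≤ n)
    (P : Matrix (Fin (2 ^ (n - 1)) ⊕ Fin (2 ^ (n - 1)))
                (Fin (2 ^ (n - 1)) ⊕ Fin (2 ^ (n - 1))) ℂ)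
    (hP : P.IsHermitian) (hP2 : P * P = P) (hrank : P.rank = 2 ^ (n - 1))
    (hPXP : P * Matrix.fromBlocks (1 : Matrix (Fin (2 ^ (n - 1))) (Fin (2 ^ (n - 1))) ℂ)
        0 0 (-1) * P = 0) :
    ∃ U V : Matrix (Fin (2 ^ (n - 1))) (Fin (2 ^ (n - 1))) ℂ,
      U * Uᴴ = 1 ∧ Uᴴ * U = 1 ∧ V * Vᴴ = 1 ∧ Vᴴ * V = 1 ∧
      P = Matrix.fromBlocks ((1 / 2 : ℂ) • 1) ((1 / 2 : ℂ) • (U * Vᴴ))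
            ((1 / 2 : ℂ) • (V * Uᴴ)) ((1 / 2 : ℂ) • 1) :=
  projection_block_structure_general n P hP hP2 hrank hPXP
end

section
/- For even n ≥ 4, the joint rank-2^{n-1} numerical range Λ_{2^{n-1}}(X_n, Y_n, Z_n) is empty. -/
open Matrix Finset Complex

/-
For even `n`, `X_n` and `Y_n` are commuting, traceless involutions with traceless product
`X_n Y_n = i^n Z_n`. Their four joint eigenprojections `E_{s,t} = (1 + s X_n)(1 + t Y_n)/4`
(`s, t = ±1`) sum to the identity and, by the trace conditions, each has rank `2^n / 4`.
If `P X_n P = a P`, `P Y_n P = b P` and `P Z_n P = c P`, then `P E_{s,t} P = γ_{s,t} P` with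
scalars summing to `1`; for one `γ_{s,t} ≠ 0` we get `P = γ⁻¹ P E_{s,t} P`, so
`rank P ≤ 2^{n-2} < 2^{n-1}`.
-/

namespace Matrix

variable {K ι : Type*} [Field K] [Fintype ι]

theorem rank_le_rank_of_mul_mul_eq_smul {P E : Matrix ι ι K} {γ : K} (hγ : γ ≠ 0)
    (h : P * E * P = γ • P) : P.rank ≤ E.rank :=
  calc P.rank = (γ⁻¹ • (P * E * P)).rank := by rw [h, smul_smul, inv_mul_cancel₀ hγ, one_smul]
    _ = (P * E * P).rank :=
      rank_smul_of_mem_nonZeroDivisors _ (mem_nonZeroDivisors_of_ne_zero (inv_ne_zero hγ))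
    _ ≤ (P * E).rank := rank_mul_le_left _ _
    _ ≤ E.rank := rank_mul_le_right _ _

variable [DecidableEq ι]

theorem natCast_rank_eq_trace_of_isIdempotentElem {E : Matrix ι ι K} (hE : IsIdempotentElem E) :
    (E.rank : K) = E.trace := by
  have hE' : IsIdempotentElem (toLin' E) := by
    rw [IsIdempotentElem, Module.End.mul_eq_comp, ← toLin'_mul, hE.eq]
  rw [← trace_toLin'_eq, (LinearMap.IsIdempotentElem.isProj_range _ hE').trace, rank, toLin'_apply']

def eigenproj (X : Matrix ι ι K) (s : K) : Matrix ι ι K := (2⁻¹ : K) • (1 + s • X)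

variable {X Y P : Matrix ι ι K} {s t : K}

theorem isIdempotentElem_eigenproj [NeZero (2 : K)] (hX : X * X = 1) (hs : s * s = 1) :
    IsIdempotentElem (eigenproj X s) := by
  have hsX : s • X * s • X = 1 := by rw [smul_mul_smul_comm, hs, hX, one_smul]
  simp only [IsIdempotentElem, eigenproj, smul_mul_smul_comm, add_mul, mul_add, one_mul, mul_one,
    hsX]
  rw [show (1 : Matrix ι ι K) + s • X + (s • X + 1) = (2 : K) • (1 + s • X) by module, smul_smul,
    mul_assoc, inv_mul_cancel₀ two_ne_zero, mul_one]

theorem commute_eigenproj (h : Commute X Y) : Commute (eigenproj X s) (eigenproj Y t) :=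
  ((Commute.one_left _).add_left
    ((Commute.one_right _).add_right ((h.smul_left s).smul_right t))).smul_left _ |>.smul_right _

theorem mul_eigenproj_mul_eigenproj_mul [CharZero K] {a b d : K} (hP : P * P = P)
    (ha : P * X * P = a • P) (hb : P * Y * P = b • P) (hd : P * (X * Y) * P = d • P) :
    P * (eigenproj X s * eigenproj Y t) * P = ((1 + s * a + t * b + s * t * d) / 4) • P := by
  simp only [eigenproj, smul_mul_assoc, mul_smul_comm, add_mul, mul_add, one_mul, mul_one,
    smul_add, smul_smul, ← Matrix.mul_assoc, hP, ha, hb]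
  rw [Matrix.mul_assoc P X Y, hd]
  match_scalars
  ring

theorem trace_eigenproj_mul_eigenproj [CharZero K] (hX : X.trace = 0) (hY : Y.trace = 0)
    (hXY : (X * Y).trace = 0) :
    (eigenproj X s * eigenproj Y t).trace = Fintype.card ι / 4 := by
  simp only [eigenproj, smul_mul_assoc, mul_smul_comm, add_mul, mul_add, one_mul, mul_one,
    trace_smul, trace_add, trace_one, hX, hY, hXY]
  simp only [smul_eq_mul, mul_zero, add_zero]
  ring

theorem four_mul_rank_le_card [CharZero K] {a b d : K} (hXY : Commute X Y) (hX : X * X = 1)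
    (hY : Y * Y = 1) (htrX : X.trace = 0) (htrY : Y.trace = 0) (htrXY : (X * Y).trace = 0)
    (hP : P * P = P) (ha : P * X * P = a • P) (hb : P * Y * P = b • P)
    (hd : P * (X * Y) * P = d • P) :
    4 * P.rank ≤ Fintype.card ι := by
  obtain ⟨s, t, hs, ht, hγ⟩ : ∃ s t : K, s * s = 1 ∧ t * t = 1 ∧
      (1 + s * a + t * b + s * t * d) / 4 ≠ 0 := by
    -- the four joint eigenprojections sum to `1`, so these four scalars sum to `1`
    by_contra! h
    have hneg : (-1 : K) * -1 = 1 := by norm_num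
    have h1 := h 1 1 (one_mul 1) (one_mul 1)
    have h2 := h 1 (-1) (one_mul 1) hneg
    have h3 := h (-1) 1 hneg (one_mul 1)
    have h4 := h (-1) (-1) hneg hneg
    exact one_ne_zero (by linear_combination h1 + h2 + h3 + h4 : (1 : K) = 0)
  have hE := (isIdempotentElem_eigenproj hX hs).mul_of_commute (commute_eigenproj hXY)
    (isIdempotentElem_eigenproj hY ht)
  have hrankE : ((4 * (eigenproj X s * eigenproj Y t).rank : ℕ) : K) = Fintype.card ι := by
    rw [Nat.cast_mul, natCast_rank_eq_trace_of_isIdempotentElem hE,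
      trace_eigenproj_mul_eigenproj htrX htrY htrXY]
    ring
  calc 4 * P.rank ≤ 4 * (eigenproj X s * eigenproj Y t).rank :=
        Nat.mul_le_mul_left 4 <| rank_le_rank_of_mul_mul_eq_smul hγ <|
          mul_eigenproj_mul_eigenproj_mul hP ha hb hd
    _ = Fintype.card ι := Nat.cast_injective hrankE

end Matrix

theorem tpow_mul (A B : Matrix (Fin 2) (Fin 2) ℂ) (n : ℕ) :
    tpow A n * tpow B n = tpow (A * B) n := by
  ext j k
  simp only [tpow, mul_apply, of_apply]
  rw [prod_univ_sum, Fintype.piFinset_univ]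
  exact sum_congr rfl fun m _ => prod_mul_distrib.symm

theorem tpow_smul (c : ℂ) (A : Matrix (Fin 2) (Fin 2) ℂ) (n : ℕ) :
    tpow (c • A) n = c ^ n • tpow A n := by
  ext j k
  simp [tpow, prod_mul_distrib]

theorem tpow_one (n : ℕ) : tpow 1 n = 1 := by
  ext j k
  by_cases h : j = k
  · simp [h, tpow, one_apply]
  · obtain ⟨i, hi⟩ := Function.ne_iff.mp h
    rw [one_apply_ne h]
    exact prod_eq_zero (mem_univ i) (one_apply_ne hi)

theorem trace_tpow (A : Matrix (Fin 2) (Fin 2) ℂ) (n : ℕ) : (tpow A n).trace = A.trace ^ n := by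
  simp only [trace, Matrix.diag, tpow, of_apply]
  rw [← Fin.prod_const, prod_univ_sum, Fintype.piFinset_univ]

theorem commute_tpow_of_anticommute {A B : Matrix (Fin 2) (Fin 2) ℂ} {n : ℕ}
    (h : B * A = -(A * B)) (hn : Even n) : Commute (tpow A n) (tpow B n) := by
  rw [Commute, SemiconjBy, tpow_mul, tpow_mul, h, ← neg_one_smul ℂ (A * B), tpow_smul,
    hn.neg_one_pow, one_smul]

theorem sigmaX_mul_sigmaX : sigmaX * sigmaX = 1 := by
  ext i j
  fin_cases i <;> fin_cases j <;> simp [sigmaX, mul_apply, Fin.sum_univ_two, one_apply]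

theorem sigmaY_mul_sigmaY : sigmaY * sigmaY = 1 := by
  ext i j
  fin_cases i <;> fin_cases j <;> simp [sigmaY, mul_apply, Fin.sum_univ_two, one_apply]

theorem sigmaX_mul_sigmaY : sigmaX * sigmaY = I • sigmaZ := by
  ext i j
  fin_cases i <;> fin_cases j <;> simp [sigmaX, sigmaY, sigmaZ, mul_apply, Fin.sum_univ_two]

theorem sigmaY_mul_sigmaX : sigmaY * sigmaX = -(sigmaX * sigmaY) := by
  ext i j
  fin_cases i <;> fin_cases j <;> simp [sigmaX, sigmaY, mul_apply, Fin.sum_univ_two]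

theorem trace_sigmaX : sigmaX.trace = 0 := by simp [sigmaX, trace, Fin.sum_univ_two]

theorem trace_sigmaY : sigmaY.trace = 0 := by simp [sigmaY, trace, Fin.sum_univ_two]

theorem trace_sigmaZ : sigmaZ.trace = 0 := by simp [sigmaZ, trace, Fin.sum_univ_two]

theorem jointRank3_empty_even (n : ℕ) (hn : 4 ≤ n) (heven : Even n) :
    jointRank3 (2 ^ (n - 1)) (tpow sigmaX n) (tpow sigmaY n) (tpow sigmaZ n) = ∅ := by
  rw [Set.eq_empty_iff_forall_notMem]
  rintro ⟨a, b, c⟩ ⟨P, -, hPP, hrank, hX, hY, hZ⟩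
  have traceless {A} (hA : A.trace = 0) : (tpow A n).trace = 0 := by
    rw [trace_tpow, hA, zero_pow (by omega)]
  have hXY : tpow sigmaX n * tpow sigmaY n = I ^ n • tpow sigmaZ n := by
    rw [tpow_mul, sigmaX_mul_sigmaY, tpow_smul]
  have hbound := four_mul_rank_le_card (d := I ^ n * c)
    (commute_tpow_of_anticommute sigmaY_mul_sigmaX heven)
    (by rw [tpow_mul, sigmaX_mul_sigmaX, tpow_one]) (by rw [tpow_mul, sigmaY_mul_sigmaY, tpow_one])
    (traceless trace_sigmaX) (traceless trace_sigmaY)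
    (by rw [hXY, trace_smul, traceless trace_sigmaZ, smul_zero])
    hPP hX hY (by rw [hXY, mul_smul_comm, smul_mul_assoc, hZ, smul_smul])
  rw [hrank, Fintype.card_fun, Fintype.card_fin, Fintype.card_fin,
    ← Nat.two_pow_pred_mul_two (by omega : 0 < n)] at hbound
  have := Nat.two_pow_pos (n - 1)
  omega
end

section
/- Let Φ: M_{2^n} → M_{2^n} be the channel Φ(ρ) = p_0 ρ + p_1 X_n ρ X_n + p_2 Y_n ρ Y_n + p_3 Z_n ρ Z_n with p_i > 0 summing to 1, and n = 3. With R the 8×8 permutation-type unitary defined by R = |000⟩⟨000| + |011⟩⟨001| + |110⟩⟨010| + |101⟩⟨011| + |111⟩⟨100| + |100⟩⟨101| + |001⟩⟨110| + |010⟩⟨111|, one has R† Φ(R(|0⟩⟨0| ⊗ ρ)R†) R = ρ_a ⊗ ρ for all density matrices ρ ∈ M_4, where ρ_a = (p_0+p_3)|0⟩⟨0| + (p_1+p_2)|1⟩⟨1|. -/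
open Matrix Kronecker Complex
open scoped ComplexOrder

/-- Qubit index type for three qubits: `ℂ^8 = ℂ^2 ⊗ ℂ^2 ⊗ ℂ^2`. -/
abbrev Q3 := Fin 2 × Fin 2 × Fin 2

noncomputable def X3 : Matrix Q3 Q3 ℂ := sigmaX ⊗ₖ (sigmaX ⊗ₖ sigmaX)
noncomputable def Y3 : Matrix Q3 Q3 ℂ := sigmaY ⊗ₖ (sigmaY ⊗ₖ sigmaY)
noncomputable def Z3 : Matrix Q3 Q3 ℂ := sigmaZ ⊗ₖ (sigmaZ ⊗ₖ sigmaZ)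

/-- The rank-one matrix `|a b c⟩⟨d e f|`. -/
noncomputable def ketbra (a b c d e f : Fin 2) : Matrix Q3 Q3 ℂ :=
  Matrix.single (a, b, c) (d, e, f) 1

/-- The encoding unitary `R` for `n = 3`. -/
noncomputable def Renc : Matrix Q3 Q3 ℂ :=
  ketbra 0 0 0 0 0 0 + ketbra 0 1 1 0 0 1 + ketbra 1 1 0 0 1 0 + ketbra 1 0 1 0 1 1 +
  ketbra 1 1 1 1 0 0 + ketbra 1 0 0 1 0 1 + ketbra 0 0 1 1 1 0 + ketbra 0 1 0 1 1 1

/-- The fully correlated noise channel for `n = 3`. -/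
noncomputable def Phi (p0 p1 p2 p3 : ℝ) (rho : Matrix Q3 Q3 ℂ) : Matrix Q3 Q3 ℂ :=
  (p0 : ℂ) • rho + (p1 : ℂ) • (X3 * rho * X3) + (p2 : ℂ) • (Y3 * rho * Y3) +
    (p3 : ℂ) • (Z3 * rho * Z3)

/-!
The encoding `R` is the permutation matrix of an `𝔽₂`-linear bijection of the computational
basis that sends the first input bit to the pattern `111` and makes the output parity equal to
the first input bit. Hence `R` intertwines `X₃` and `Z₃` with `σ_x ⊗ 1` and `σ_z ⊗ 1`, and
(since `σ_y = i σ_x σ_z`) `Y₃` with `-σ_y ⊗ 1`: conjugated by `R`, the correlated noise acts on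
the ancilla alone, flipping `|0⟩⟨0|` to `|1⟩⟨1|` under `X₃` and `Y₃` and fixing it under `Z₃`.
-/

theorem conj_mul_conj_of_mul_eq_mul {G : Type*} [Monoid G] {U V P Q : G}
    (hVU : V * U = 1) (hPQ : P * U = U * Q) (M : G) :
    V * (P * (U * M * V) * P) * U = Q * M * Q := by
  have hQ : V * P * U = Q := by rw [mul_assoc, hPQ, ← mul_assoc, hVU, one_mul]
  rw [← hQ]
  simp only [mul_assoc]

theorem kronecker_one_conj {α m n : Type*} [CommSemiring α] [Fintype m] [Fintype n]
    [DecidableEq n] (A B : Matrix m m α) (C : Matrix n n α) :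
    (A ⊗ₖ (1 : Matrix n n α)) * (B ⊗ₖ C) * (A ⊗ₖ 1) = (A * B * A) ⊗ₖ C := by
  rw [← mul_kronecker_mul, ← mul_kronecker_mul, one_mul, mul_one]

theorem conjTranspose_mul_Phi_conj {U A B C : Matrix Q3 Q3 ℂ} (hU : Uᴴ * U = 1)
    (hX : X3 * U = U * A) (hY : Y3 * U = U * B) (hZ : Z3 * U = U * C)
    (p0 p1 p2 p3 : ℝ) (M : Matrix Q3 Q3 ℂ) :
    Uᴴ * Phi p0 p1 p2 p3 (U * M * Uᴴ) * U =
      (p0 : ℂ) • M + (p1 : ℂ) • (A * M * A) + (p2 : ℂ) • (B * M * B) +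
        (p3 : ℂ) • (C * M * C) := by
  have hM : Uᴴ * (U * M * Uᴴ) * U = M := by
    simp only [← mul_assoc, hU, one_mul]
    rw [mul_assoc, hU, mul_one]
  simp only [Phi, Matrix.mul_add, Matrix.add_mul, Matrix.mul_smul, Matrix.smul_mul, hM,
    conj_mul_conj_of_mul_eq_mul hU hX, conj_mul_conj_of_mul_eq_mul hU hY,
    conj_mul_conj_of_mul_eq_mul hU hZ]

theorem sigmaX_conj_single_zero :
    sigmaX * single (0 : Fin 2) (0 : Fin 2) (1 : ℂ) * sigmaX = single 1 1 1 := by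
  ext i j
  simp only [mul_apply, Fin.sum_univ_two]
  fin_cases i <;> fin_cases j <;> simp [sigmaX]

theorem neg_sigmaY_conj_single_zero :
    -sigmaY * single (0 : Fin 2) (0 : Fin 2) (1 : ℂ) * -sigmaY = single 1 1 1 := by
  ext i j
  simp only [mul_apply, Fin.sum_univ_two]
  fin_cases i <;> fin_cases j <;> simp [sigmaY]

theorem sigmaZ_conj_single_zero :
    sigmaZ * single (0 : Fin 2) (0 : Fin 2) (1 : ℂ) * sigmaZ = single 0 0 1 := by
  ext i j
  simp only [mul_apply, Fin.sum_univ_two]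
  fin_cases i <;> fin_cases j <;> simp [sigmaZ]
theorem Renc_conjTranspose_mul_self : Rencᴴ * Renc = 1 := by
  ext ⟨a, b, c⟩ ⟨d, e, f⟩
  fin_cases a <;> fin_cases b <;> fin_cases c <;> fin_cases d <;> fin_cases e <;> fin_cases f <;>
    simp [Renc, ketbra, mul_apply, single_apply]

theorem X3_mul_Renc : X3 * Renc = Renc * (sigmaX ⊗ₖ 1) := by
  ext ⟨a, b, c⟩ ⟨d, e, f⟩
  fin_cases a <;> fin_cases b <;> fin_cases c <;> fin_cases d <;> fin_cases e <;> fin_cases f <;>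
    simp [Renc, ketbra, X3, sigmaX, mul_apply, Fintype.sum_prod_type, one_apply, single_apply]

theorem Y3_mul_Renc : Y3 * Renc = Renc * ((-sigmaY) ⊗ₖ 1) := by
  ext ⟨a, b, c⟩ ⟨d, e, f⟩
  fin_cases a <;> fin_cases b <;> fin_cases c <;> fin_cases d <;> fin_cases e <;> fin_cases f <;>
    simp [Renc, ketbra, Y3, sigmaY, mul_apply, Fintype.sum_prod_type, one_apply, single_apply]

theorem Z3_mul_Renc : Z3 * Renc = Renc * (sigmaZ ⊗ₖ 1) := by
  ext ⟨a, b, c⟩ ⟨d, e, f⟩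
  fin_cases a <;> fin_cases b <;> fin_cases c <;> fin_cases d <;> fin_cases e <;> fin_cases f <;>
    simp [Renc, ketbra, Z3, sigmaZ, mul_apply, Fintype.sum_prod_type, one_apply, single_apply]

theorem qecc_three_qubits_general (p0 p1 p2 p3 : ℝ)
    (rho : Matrix (Fin 2 × Fin 2) (Fin 2 × Fin 2) ℂ) :
    Rencᴴ * Phi p0 p1 p2 p3
        (Renc * ((Matrix.single (0 : Fin 2) (0 : Fin 2) (1 : ℂ)) ⊗ₖ rho) * Rencᴴ)
      * Renc =
    (((p0 + p3 : ℝ) : ℂ) • Matrix.single (0 : Fin 2) (0 : Fin 2) (1 : ℂ) +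
      ((p1 + p2 : ℝ) : ℂ) • Matrix.single (1 : Fin 2) (1 : Fin 2) (1 : ℂ)) ⊗ₖ rho := by
  rw [conjTranspose_mul_Phi_conj Renc_conjTranspose_mul_self X3_mul_Renc Y3_mul_Renc
    Z3_mul_Renc, kronecker_one_conj, kronecker_one_conj, kronecker_one_conj,
    sigmaX_conj_single_zero, neg_sigmaY_conj_single_zero, sigmaZ_conj_single_zero,
    add_kronecker, smul_kronecker, smul_kronecker]
  push_cast
  module

theorem qecc_three_qubits (p0 p1 p2 p3 : ℝ)
    (h0 : 0 < p0) (h1 : 0 < p1) (h2 : 0 < p2) (h3 : 0 < p3)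
    (hsum : p0 + p1 + p2 + p3 = 1)
    (rho : Matrix (Fin 2 × Fin 2) (Fin 2 × Fin 2) ℂ)
    (hpos : rho.PosSemidef) (htr : rho.trace = 1) :
    Rencᴴ * Phi p0 p1 p2 p3
        (Renc * ((Matrix.single (0 : Fin 2) (0 : Fin 2) (1 : ℂ)) ⊗ₖ rho) * Rencᴴ)
      * Renc =
    (((p0 + p3 : ℝ) : ℂ) • Matrix.single (0 : Fin 2) (0 : Fin 2) (1 : ℂ) +
      ((p1 + p2 : ℝ) : ℂ) • Matrix.single (1 : Fin 2) (1 : Fin 2) (1 : ℂ)) ⊗ₖ rho :=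
  qecc_three_qubits_general p0 p1 p2 p3 rho
end
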